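/- arXiv:2003.11861 — 5 statements merged into one kernel-verified Lean document; each statement's English description precedes it below -/
import Mathlib

section
/- Let C be an infinite (2k+1)-diagonal matrix with uniformly bounded entries |C(i,j)| ≤ K, and let P(x) = Σ_{l=0}^{M} p_l x^l be a fixed polynomial. Then (1/n)·(Tr(P(C_{n×n})) − Tr((P(C))_{n×n})) → 0 as n → ∞, where Tr of a truncated infinite matrix means the sum of its first n diagonal entries. -/
/-!
The `l`-th power of a `k`-banded matrix is `l k`-banded, so the entry `(i, j)` of `(C_{n×n})^l`
only involves entries of `C` with indices at most `i + l k`; hence `(C_{n×n})^l` and `C^l` have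
the same diagonal entry at every `i < n - l k`. All entries of both powers are bounded by
`((2k + 1) K)^l`, so for each monomial the two traces differ by at most `2 l k ((2k + 1) K)^l`,
uniformly in `n`, and this bounded defect vanishes after division by `n`.
-/

open scoped BigOperators

noncomputable def matMul (C D : ℕ → ℕ → ℝ) : ℕ → ℕ → ℝ := fun i j => ∑' p, C i p * D p j

noncomputable def matPow (C : ℕ → ℕ → ℝ) : ℕ → ℕ → ℕ → ℝ
  | 0 => fun i j => if i = j then (1 : ℝ) else 0
  | l + 1 => matMul (matPow C l) C

def trunc (C : ℕ → ℕ → ℝ) (n : ℕ) : ℕ → ℕ → ℝ :=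
  fun i j => if i < n ∧ j < n then C i j else 0

noncomputable def tr (A : ℕ → ℕ → ℝ) (n : ℕ) : ℝ := ∑ i ∈ Finset.range n, A i i

open Filter Topology

def IsBanded (k : ℕ) (C : ℕ → ℕ → ℝ) : Prop :=
  ∀ i j : ℕ, (k : ℤ) < |(i : ℤ) - (j : ℤ)| → C i j = 0

namespace IsBanded

variable {a b k : ℕ} {A C D : ℕ → ℕ → ℝ}

theorem matMul_apply_eq_sum (hD : IsBanded k D) (i j : ℕ) :
    matMul A D i j = ∑ q ∈ Finset.Icc (j - k) (j + k), A i q * D q j := by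
  refine tsum_eq_sum fun q hq => ?_
  rw [Finset.mem_Icc, not_and_or, not_le, not_le] at hq
  rw [hD q j (by rw [lt_abs]; omega), mul_zero]

theorem matMul (hA : IsBanded a A) (hD : IsBanded b D) : IsBanded (a + b) (matMul A D) := by
  intro i j hij
  refine (tsum_congr fun q => ?_).trans tsum_zero
  by_cases hiq : (a : ℤ) < |(i : ℤ) - q|
  · rw [hA i q hiq, zero_mul]
  · have hqj : (b : ℤ) < |(q : ℤ) - j| := by
      have := abs_sub_le (i : ℤ) q j
      push_cast at hij
      linarith
    rw [hD q j hqj, mul_zero]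

theorem matPow (hC : IsBanded k C) (l : ℕ) : IsBanded (l * k) (matPow C l) := by
  induction l with
  | zero =>
    intro i j hij
    have : i ≠ j := by rintro rfl; simp at hij
    simp [_root_.matPow, this]
  | succ l ih => rw [add_mul, one_mul]; exact ih.matMul hC

theorem trunc (hC : IsBanded k C) (n : ℕ) : IsBanded k (trunc C n) := by
  intro i j hij
  simp [_root_.trunc, hC i j hij]

theorem abs_matMul_le {α β : ℝ} (hD : IsBanded k D) (hA : ∀ i j, |A i j| ≤ α)
    (hDb : ∀ i j, |D i j| ≤ β) (i j : ℕ) : |_root_.matMul A D i j| ≤ (2 * k + 1) * α * β := by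
  have hα : 0 ≤ α := (abs_nonneg _).trans (hA 0 0)
  rw [hD.matMul_apply_eq_sum]
  calc |∑ q ∈ Finset.Icc (j - k) (j + k), A i q * D q j|
      ≤ ∑ q ∈ Finset.Icc (j - k) (j + k), α * β := by
        refine (Finset.abs_sum_le_sum_abs _ _).trans (Finset.sum_le_sum fun q _ => ?_)
        rw [abs_mul]
        exact mul_le_mul (hA i q) (hDb q j) (abs_nonneg _) hα
    _ ≤ (2 * k + 1) * α * β := by
        have hcard : ((Finset.Icc (j - k) (j + k)).card : ℝ) ≤ 2 * k + 1 := by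
          rw [Nat.card_Icc]; norm_cast; omega
        rw [Finset.sum_const, nsmul_eq_mul, mul_assoc]
        exact mul_le_mul_of_nonneg_right hcard (mul_nonneg hα ((abs_nonneg _).trans (hDb 0 0)))

theorem abs_matPow_le {K : ℝ} (hC : IsBanded k C) (hK : ∀ i j, |C i j| ≤ K) (l i j : ℕ) :
    |_root_.matPow C l i j| ≤ ((2 * k + 1) * K) ^ l := by
  induction l generalizing i j with
  | zero => by_cases h : i = j <;> simp [_root_.matPow, h]
  | succ l ih =>
    calc |_root_.matPow C (l + 1) i j| ≤ (2 * k + 1) * ((2 * k + 1) * K) ^ l * K :=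
          hC.abs_matMul_le ih hK i j
      _ = ((2 * k + 1) * K) ^ (l + 1) := by ring

theorem matPow_trunc_apply (hC : IsBanded k C) {n l i j : ℕ} (hi : i + l * k < n) (hj : j < n) :
    _root_.matPow (_root_.trunc C n) l i j = _root_.matPow C l i j := by
  induction l generalizing i j with
  | zero => rfl
  | succ l ih =>
    refine tsum_congr fun q => ?_
    by_cases hiq : ((l * k : ℕ) : ℤ) < |(i : ℤ) - q|
    · rw [(hC.trunc n).matPow l i q hiq, hC.matPow l i q hiq, zero_mul, zero_mul]
    · have hq : q < n := by
        rw [not_lt, abs_le] at hiq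
        push_cast at hiq
        nlinarith [hiq.1]
      rw [ih (by nlinarith) hq, _root_.trunc, if_pos ⟨hq, hj⟩]

end IsBanded

theorem abs_sum_range_le_of_eq_zero {f : ℕ → ℝ} {m n : ℕ} {c : ℝ}
    (hf : ∀ i, i + m < n → f i = 0) (hc : ∀ i, |f i| ≤ c) :
    |∑ i ∈ Finset.range n, f i| ≤ m * c := by
  have hc0 : 0 ≤ c := (abs_nonneg _).trans (hc 0)
  rw [← Finset.sum_range_add_sum_Ico f (Nat.sub_le n m),
    Finset.sum_eq_zero fun i hi => hf i (by rw [Finset.mem_range] at hi; omega), zero_add]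
  calc |∑ i ∈ Finset.Ico (n - m) n, f i| ≤ ∑ i ∈ Finset.Ico (n - m) n, c :=
        (Finset.abs_sum_le_sum_abs _ _).trans (Finset.sum_le_sum fun i _ => hc i)
    _ ≤ m * c := by
        rw [Finset.sum_const, nsmul_eq_mul, Nat.card_Ico]
        exact mul_le_mul_of_nonneg_right (by norm_cast; omega) hc0

theorem abs_tr_matPow_trunc_sub_le {k : ℕ} {K : ℝ} {C : ℕ → ℕ → ℝ}
    (hC : IsBanded k C) (hK : ∀ i j, |C i j| ≤ K) (l n : ℕ) :
    |tr (matPow (trunc C n) l) n - tr (trunc (matPow C l) n) n|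
      ≤ (l * k : ℕ) * (2 * ((2 * k + 1) * K) ^ l) := by
  have hKtrunc : ∀ i j, |trunc C n i j| ≤ K := fun i j => by
    unfold trunc
    split_ifs
    · exact hK i j
    · simpa using (abs_nonneg _).trans (hK 0 0)
  have hdiff : tr (matPow (trunc C n) l) n - tr (trunc (matPow C l) n) n
      = ∑ i ∈ Finset.range n, (matPow (trunc C n) l i i - matPow C l i i) := by
    rw [tr, tr, ← Finset.sum_sub_distrib]
    refine Finset.sum_congr rfl fun i hi => ?_
    rw [Finset.mem_range] at hi
    rw [trunc, if_pos ⟨hi, hi⟩]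
  rw [hdiff]
  refine abs_sum_range_le_of_eq_zero (fun i hi => ?_) fun i => ?_
  · rw [hC.matPow_trunc_apply hi (by omega), sub_self]
  · refine (abs_sub _ _).trans ?_
    linarith [(hC.trunc n).abs_matPow_le hKtrunc l i i, hC.abs_matPow_le hK l i i]

/-- For a banded matrix with bounded entries and a fixed polynomial `P = Σ p_l x^l`,
`(1/n)(Tr(P(C_{n×n})) − Tr((P(C))_{n×n})) → 0`. -/
theorem stmt2 (k M : ℕ) (K : ℝ) (C : ℕ → ℕ → ℝ) (p : ℕ → ℝ)
    (hband : ∀ i j : ℕ, (k : ℤ) < |(i : ℤ) - (j : ℤ)| → C i j = 0)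
    (hbdd : ∀ i j : ℕ, |C i j| < K) :
    Filter.Tendsto (fun n : ℕ =>
      (1 / (n : ℝ)) *
        ((∑ l ∈ Finset.range (M + 1), p l * tr (matPow (trunc C n) l) n) -
          (∑ l ∈ Finset.range (M + 1), p l * tr (trunc (matPow C l) n) n)))
      Filter.atTop (nhds 0) := by
  have hC : IsBanded k C := hband
  have hdefect : ∀ l, Tendsto (fun n : ℕ => 1 / (n : ℝ) *
      (tr (matPow (trunc C n) l) n - tr (trunc (matPow C l) n) n)) atTop (𝓝 0) := fun l =>
    tendsto_one_div_atTop_nhds_zero_nat.zero_mul_isBoundedUnder_le <| isBoundedUnder_of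
      ⟨_, fun n => abs_tr_matPow_trunc_sub_le hC (fun i j => (hbdd i j).le) l n⟩
  have hsum := tendsto_finsetSum (Finset.range (M + 1)) fun l _ => (hdefect l).const_mul (p l)
  rw [Finset.sum_eq_zero fun l _ => mul_zero (p l)] at hsum
  refine hsum.congr fun n => ?_
  rw [← Finset.sum_sub_distrib, Finset.mul_sum]
  exact Finset.sum_congr rfl fun l _ => by ring
end

section
/- Endpoint values of the averaged coefficients: with U_k defined from the coefficients d_0,…,d_{L−1} of b̃(x) = Σ_{k=0}^{L−1} d_k x^k by U_{2l} = Σ_{p=max(l,1)}^{⌊L/2⌋} (d_{2p−1}/(2p))·C(2p, p−l)·2^{−2p} and U_{2l+1} = Σ_{p=l}^{⌊(L−1)/2⌋} (d_{2p}/(2p+1))·C(2p+1, p−l)·2^{−2p−1}, one has 2 Σ_{k=1}^{L} (±1)^k U_k = Σ_{k=1}^{L} (±1)^k d_{k−1}/k − U_0, i.e. 2Σ_{k=1}^L (±1)^k U_k = Q(±1) where Q(x) = Σ_{k=1}^{L} d_{k−1} x^k / k − U_0. -/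
/-!
Split the sum by the parity of `k`: `ε ^ k` is `1` on even and `ε` on odd indices. Interchanging
the order of summation in `∑ₗ U_{2l}` and `∑ₗ U_{2l+1}` leaves, for each `p`, the binomial half sums
`2 ∑_{l=1}^p C(2p, p-l) = 4^p - C(2p, p)` and `2 ∑_{l=0}^p C(2p+1, p-l) = 2^(2p+1)`. The first turns
the `p`-th even contribution into `d_{2p-1}/(2p)` minus the `p`-th term of `U_0`, the second turns
the `p`-th odd contribution into exactly `d_{2p}/(2p+1)`.
-/

open scoped BigOperators

/-- The averaged recurrence coefficients `U_k` built from the coefficients of `b̃`. -/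
noncomputable def Ucoef (d : ℕ → ℝ) (L : ℕ) : ℕ → ℝ := fun k =>
  if k % 2 = 0 then
    ∑ p ∈ Finset.Icc (max (k / 2) 1) (L / 2),
      d (2 * p - 1) / (2 * p) * (Nat.choose (2 * p) (p - k / 2)) / 2 ^ (2 * p)
  else
    ∑ p ∈ Finset.Icc (k / 2) ((L - 1) / 2),
      d (2 * p) / (2 * p + 1) * (Nat.choose (2 * p + 1) (p - k / 2)) / 2 ^ (2 * p + 1)

open Finset

section Summation

variable {M : Type*} [AddCommMonoid M]

theorem sum_Icc_one_eq_sum_odd_add_sum_even (f : ℕ → M) {n : ℕ} (hn : 1 ≤ n) :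
    ∑ k ∈ Icc 1 n, f k
      = ∑ l ∈ Icc 0 ((n - 1) / 2), f (2 * l + 1) + ∑ l ∈ Icc 1 (n / 2), f (2 * l) := by
  rw [← sum_filter_add_sum_filter_not (Icc 1 n) Odd]
  congr 1
  · refine sum_nbij' (· / 2) (2 * · + 1) ?_ ?_ ?_ ?_ ?_ <;>
      simp only [mem_filter, mem_Icc, Nat.odd_iff] <;> intros <;> (try congr 1) <;> omega
  · refine sum_nbij' (· / 2) (2 * ·) ?_ ?_ ?_ ?_ ?_ <;>
      simp only [mem_filter, mem_Icc, Nat.odd_iff] <;> intros <;> (try congr 1) <;> omega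

theorem sum_Icc_sum_Icc_comm (a n : ℕ) (f : ℕ → ℕ → M) :
    ∑ l ∈ Icc a n, ∑ p ∈ Icc l n, f l p = ∑ p ∈ Icc a n, ∑ l ∈ Icc a p, f l p :=
  sum_comm' fun _ _ => by simp only [mem_Icc]; omega

theorem sum_Icc_reflect (f : ℕ → M) (a p : ℕ) :
    ∑ l ∈ Icc a p, f (p - l) = ∑ i ∈ range (p + 1 - a), f i :=
  sum_nbij' (p - ·) (p - ·) (by simp only [mem_Icc, mem_range]; omega)
    (by simp only [mem_Icc, mem_range]; omega) (by simp only [mem_Icc]; omega)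
    (by simp only [mem_range]; omega) fun _ _ => rfl

end Summation

theorem Nat.two_mul_sum_range_choose_add_choose_self (p : ℕ) :
    2 * ∑ i ∈ range p, (2 * p).choose i + (2 * p).choose p = 4 ^ p := by
  rw [← Nat.sum_range_choose_halfway p, sum_range_succ']
  simp only [Nat.choose_succ_succ', sum_add_distrib, Nat.choose_zero_right]
  have h := sum_range_succ' (fun i => (2 * p).choose i) p
  rw [sum_range_succ, Nat.choose_zero_right] at h
  omega

theorem two_mul_sum_Icc_choose_two_mul_sub_div (p : ℕ) :
    2 * ∑ l ∈ Icc 1 p, ((2 * p).choose (p - l) : ℝ) / 2 ^ (2 * p)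
      = 1 - (2 * p).choose p / 2 ^ (2 * p) := by
  have h : 2 * (∑ l ∈ Icc 1 p, (2 * p).choose (p - l) : ℝ) + (2 * p).choose p = 2 ^ (2 * p) := by
    rw [sum_Icc_reflect (fun i => ((2 * p).choose i : ℝ)), Nat.add_sub_cancel, pow_mul]
    norm_num
    exact_mod_cast Nat.two_mul_sum_range_choose_add_choose_self p
  rw [← sum_div]
  field_simp
  linear_combination h

theorem two_mul_sum_Icc_choose_two_mul_add_one_sub_div (p : ℕ) :
    2 * ∑ l ∈ Icc 0 p, ((2 * p + 1).choose (p - l) : ℝ) / 2 ^ (2 * p + 1) = 1 := by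
  have h : (∑ l ∈ Icc 0 p, (2 * p + 1).choose (p - l) : ℝ) = 4 ^ p := by
    rw [sum_Icc_reflect (fun i => ((2 * p + 1).choose i : ℝ)), Nat.sub_zero]
    exact_mod_cast Nat.sum_range_choose_halfway p
  rw [← sum_div, h, pow_succ, pow_mul]
  field_simp
  norm_num

theorem Ucoef_two_mul (d : ℕ → ℝ) (L : ℕ) {l : ℕ} (hl : 1 ≤ l) :
    Ucoef d L (2 * l)
      = ∑ p ∈ Icc l (L / 2), d (2 * p - 1) / (2 * p) * (2 * p).choose (p - l) / 2 ^ (2 * p) := by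
  simp [Ucoef, max_eq_left hl]

theorem Ucoef_two_mul_add_one (d : ℕ → ℝ) (L l : ℕ) :
    Ucoef d L (2 * l + 1)
      = ∑ p ∈ Icc l ((L - 1) / 2),
          d (2 * p) / (2 * p + 1) * (2 * p + 1).choose (p - l) / 2 ^ (2 * p + 1) := by
  simp [Ucoef, Nat.add_mod, Nat.add_div]

theorem two_mul_sum_Ucoef_two_mul (d : ℕ → ℝ) (L : ℕ) :
    2 * ∑ l ∈ Icc 1 (L / 2), Ucoef d L (2 * l)
      = ∑ p ∈ Icc 1 (L / 2), d (2 * p - 1) / (2 * p) - Ucoef d L 0 := by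
  rw [sum_congr rfl fun l hl => Ucoef_two_mul d L (mem_Icc.1 hl).1, sum_Icc_sum_Icc_comm, mul_sum]
  simp only [Ucoef, Nat.zero_mod, Nat.zero_div, if_true, max_eq_right (Nat.zero_le 1),
    Nat.sub_zero, ← sum_sub_distrib]
  refine sum_congr rfl fun p _ => ?_
  simp only [mul_div_assoc, ← mul_sum, mul_left_comm (2 : ℝ),
    two_mul_sum_Icc_choose_two_mul_sub_div]
  ring

theorem two_mul_sum_Ucoef_two_mul_add_one (d : ℕ → ℝ) (L : ℕ) :
    2 * ∑ l ∈ Icc 0 ((L - 1) / 2), Ucoef d L (2 * l + 1)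
      = ∑ p ∈ Icc 0 ((L - 1) / 2), d (2 * p) / (2 * p + 1) := by
  rw [sum_congr rfl fun l _ => Ucoef_two_mul_add_one d L l, sum_Icc_sum_Icc_comm, mul_sum]
  refine sum_congr rfl fun p _ => ?_
  simp only [mul_div_assoc, ← mul_sum, mul_left_comm (2 : ℝ),
    two_mul_sum_Icc_choose_two_mul_add_one_sub_div, mul_one]

/-- Endpoint values of the averaged coefficients:
`2 Σ_{k=1}^L (±1)^k U_k = Σ_{k=1}^L (±1)^k d_{k−1}/k − U_0 = Q(±1)`. -/
theorem stmt12 (L : ℕ) (hL : 1 ≤ L) (d : ℕ → ℝ) (ε : ℝ) (hε : ε = 1 ∨ ε = -1) :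
    2 * ∑ k ∈ Finset.Icc 1 L, ε ^ k * Ucoef d L k
      = (∑ k ∈ Finset.Icc 1 L, ε ^ k * d (k - 1) / k) - Ucoef d L 0 := by
  have hε2 : ε ^ 2 = 1 := by rcases hε with rfl | rfl <;> norm_num
  have heven (l : ℕ) : ε ^ (2 * l) = 1 := by rw [pow_mul, hε2, one_pow]
  rw [sum_Icc_one_eq_sum_odd_add_sum_even _ hL, sum_Icc_one_eq_sum_odd_add_sum_even _ hL]
  simp only [pow_succ, heven, one_mul, mul_div_assoc, ← mul_sum, Nat.add_sub_cancel]
  push_cast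
  linear_combination ε * two_mul_sum_Ucoef_two_mul_add_one d L + two_mul_sum_Ucoef_two_mul d L
end

section
/- Quadratic norm identity for one-step exceptional polynomials: let T[y] = p y'' + q y' (with r = 0) be a Sturm–Liouville operator with eigenpolynomials P_n and eigenvalues λ_n, w a rational function satisfying the Riccati equation p(w' + w²) + q w = λ̃, and b a polynomial with P_n^{[1]} := b P_n' − b w P_n. Then pointwise on the interval, (b P_n' − b w P_n)² · (p w₀ / b²) = (P_n')² p w₀ + λ̃ P_n² w₀ − (P_n² w p w₀)', where w₀ is the classical weight, i.e. (p w₀)' = q w₀. -/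
theorem deriv_fun_sq_mul_mul {𝕜 : Type*} [NontriviallyNormedField 𝕜] {f g h : 𝕜 → 𝕜} {x : 𝕜}
    (hf : DifferentiableAt 𝕜 f x) (hg : DifferentiableAt 𝕜 g x) (hh : DifferentiableAt 𝕜 h x) :
    deriv (fun t => f t ^ 2 * g t * h t) x
      = (2 * f x * deriv f x * g x + f x ^ 2 * deriv g x) * h x + f x ^ 2 * g x * deriv h x := by
  rw [deriv_fun_mul (c := fun t => f t ^ 2 * g t) ((hf.pow 2).mul hg) hh,
    deriv_fun_mul (c := fun t => f t ^ 2) (hf.pow 2) hg, deriv_fun_pow hf 2]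
  ring

theorem stmt16_general (s : Set ℝ) (p q w w0 b Pn : ℝ → ℝ) (lam : ℝ)
    (hb : ∀ x ∈ s, b x ≠ 0)
    (hdp : ∀ x ∈ s, DifferentiableAt ℝ p x)
    (hdw : ∀ x ∈ s, DifferentiableAt ℝ w x)
    (hdw0 : ∀ x ∈ s, DifferentiableAt ℝ w0 x)
    (hdPn : ∀ x ∈ s, DifferentiableAt ℝ Pn x)
    (hric : ∀ x ∈ s, p x * (deriv w x + w x ^ 2) + q x * w x = lam)
    (hpearson : ∀ x ∈ s, deriv (fun t => p t * w0 t) x = q x * w0 x) :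
    ∀ x ∈ s,
      (b x * deriv Pn x - b x * w x * Pn x) ^ 2 * (p x * w0 x / (b x) ^ 2)
        = (deriv Pn x) ^ 2 * (p x * w0 x) + lam * (Pn x) ^ 2 * w0 x
          - deriv (fun t => (Pn t) ^ 2 * w t * (p t * w0 t)) x := by
  intro x hx
  have htotal : deriv (fun t => (Pn t) ^ 2 * w t * (p t * w0 t)) x
      = (2 * Pn x * deriv Pn x * w x + Pn x ^ 2 * deriv w x) * (p x * w0 x)
        + Pn x ^ 2 * w x * (q x * w0 x) := by
    rw [deriv_fun_sq_mul_mul (hdPn x hx) (hdw x hx) ((hdp x hx).fun_mul (hdw0 x hx)), hpearson x hx]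
  have hb0 := hb x hx
  -- After eliminating `lam` by the Riccati equation, both sides are polynomial in the values at `x`.
  rw [htotal, ← hric x hx]
  field_simp
  ring

/-- Quadratic norm identity for one-step exceptional polynomials:
`(b P' − b w P)² (p w₀ / b²) = (P')² p w₀ + λ̃ P² w₀ − (P² w p w₀)'` pointwise, given the
Riccati equation for `w` and the Pearson equation for `w₀`. -/
theorem stmt16 (s : Set ℝ) (hs : IsOpen s) (p q w w0 b Pn : ℝ → ℝ) (lam : ℝ)
    (hb : ∀ x ∈ s, b x ≠ 0)
    (hdp : ∀ x ∈ s, DifferentiableAt ℝ p x)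
    (hdw : ∀ x ∈ s, DifferentiableAt ℝ w x)
    (hdw0 : ∀ x ∈ s, DifferentiableAt ℝ w0 x)
    (hdPn : ∀ x ∈ s, DifferentiableAt ℝ Pn x)
    (hric : ∀ x ∈ s, p x * (deriv w x + w x ^ 2) + q x * w x = lam)
    (hpearson : ∀ x ∈ s, deriv (fun t => p t * w0 t) x = q x * w0 x) :
    ∀ x ∈ s,
      (b x * deriv Pn x - b x * w x * Pn x) ^ 2 * (p x * w0 x / (b x) ^ 2)
        = (deriv Pn x) ^ 2 * (p x * w0 x) + lam * (Pn x) ^ 2 * w0 x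
          - deriv (fun t => (Pn t) ^ 2 * w t * (p t * w0 t)) x :=
  stmt16_general s p q w w0 b Pn lam hb hdp hdw hdw0 hdPn hric hpearson
end

section
/- If the recurrence coefficients of a sequence of orthonormal polynomials q_n on [−1,1] satisfy a_n → 1/2 and b_n → 0 (where x q_n = a_{n+1} q_{n+1} + b_n q_n + a_n q_{n−1}), then for every continuous function f on [−1,1], (1/n) Σ_{i=1}^n f(ξ_{i,n}) → ∫_{−1}^1 f dμ_e, where ξ_{i,n} are the zeros of q_n and μ_e is the arcsine measure dμ_e(x) = dx/(π√(1−x²)). -/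
/-!
The zeros of `q n` are the eigenvalues of an `n × n` truncated Jacobi matrix (after replacing
`q 0` by `1`, which only changes its first two rows), so their power sums are the traces of its
powers. Its entries converge to those of the free Jacobi matrix (off-diagonal `1/2`, diagonal
`0`), and a telescoping estimate shows that the traces of the `l`-th powers of the two matrices
differ by `o(n)`. The eigenvalues of the free matrix are `cos (kπ / (n + 1))`, whose normalized
counting measures converge to the arcsine law by a Riemann sum in `θ = arccos x`. Weierstrass
approximation passes from monomials to continuous functions.
-/

open Filter Topology Set Real Polynomial MeasureTheory
open scoped Matrix

namespace Matrix

theorem trace_pow_eq_sum_pow_of_injective_eigenvalues {K ι : Type*} [Field K] [Fintype ι]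
    [DecidableEq ι] (M : Matrix ι ι K) (μ : ι → K) (hμ : Function.Injective μ)
    (hev : ∀ k, ∃ v : ι → K, v ≠ 0 ∧ M *ᵥ v = μ k • v) (l : ℕ) :
    (M ^ l).trace = ∑ k, μ k ^ l := by
  choose v hv0 hv using hev
  let f : Module.End K (ι → K) := toLin' M
  have heig : ∀ k, f.HasEigenvector (μ k) (v k) := fun k =>
    Module.End.hasEigenvector_iff.mpr
      ⟨Module.End.mem_eigenspace_iff.mpr (by simpa [f] using hv k), hv0 k⟩
  have hli := f.eigenvectors_linearIndependent' μ hμ v heig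
  let b := basisOfLinearIndependentOfCardEqFinrank' v hli (by simp)
  calc (M ^ l).trace = LinearMap.trace K _ (f ^ l) := by
        rw [← Matrix.toLin'_pow, Matrix.trace_toLin'_eq]
    _ = ∑ k, μ k ^ l := by
        rw [LinearMap.trace_eq_matrix_trace K b, Matrix.trace]
        refine Finset.sum_congr rfl fun k _ => ?_
        have hb : b k = v k := by simp [b]
        rw [Matrix.diag_apply, LinearMap.toMatrix_apply, hb, (heig k).pow_apply, ← hb, map_smul,
          b.repr_self]
        simp

-- Row `i` carries `u i` above, `d i` on and `v i` below the diagonal; `v 0` is never used.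
def tridiag {R : Type*} [AddZeroClass R] (n : ℕ) (u d v : ℕ → R) : Matrix (Fin n) (Fin n) R :=
  of fun i j => (if (j : ℕ) = i + 1 then u i else 0) + (if (j : ℕ) = i then d i else 0)
    + (if (j : ℕ) + 1 = i then v i else 0)

theorem tridiag_sub {R : Type*} [AddGroup R] (n : ℕ) (u d v u' d' v' : ℕ → R) :
    tridiag n u d v - tridiag n u' d' v' = tridiag n (u - u') (d - d') (v - v') := by
  ext i j
  simp only [tridiag, sub_apply, of_apply, Pi.sub_apply]
  split_ifs <;> first | omega | simp

theorem tridiag_mulVec_eq_smul {R : Type*} [CommRing R] {n : ℕ} {u d v w : ℕ → R} {x : R}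
    (hw₀ : w 0 = 0) (hwₙ : w (n + 1) = 0)
    (hrec : ∀ k < n, x * w (k + 1) = u k * w (k + 2) + d k * w (k + 1) + v k * w k) :
    tridiag n u d v *ᵥ (fun j : Fin n => w (j + 1)) = x • fun j : Fin n => w (j + 1) := by
  ext ⟨i, hi⟩
  rw [Pi.smul_apply, smul_eq_mul, hrec i hi, mulVec, dotProduct]
  simp only [tridiag, of_apply, add_mul, ite_mul, zero_mul, Finset.sum_add_distrib]
  rw [Fin.sum_univ_eq_sum_range (fun j => if j = i + 1 then u i * w (j + 1) else 0),
    Fin.sum_univ_eq_sum_range (fun j => if j = i then d i * w (j + 1) else 0),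
    Fin.sum_univ_eq_sum_range (fun j => if j + 1 = i then v i * w (j + 1) else 0),
    Finset.sum_ite_eq', Finset.sum_ite_eq']
  congr 1
  · congr 1
    · split_ifs with h
      · rfl
      · rw [show i + 2 = n + 1 by simp at h; omega, hwₙ, mul_zero]
    · simp [hi]
  · rcases i with _ | i
    · simp [hw₀]
    · simp only [Nat.add_right_cancel_iff, Finset.sum_ite_eq', Finset.mem_range]
      rw [if_pos (by omega)]

theorem sum_abs_tridiag_apply_le {n : ℕ} (u d v : ℕ → ℝ) (i : Fin n) :
    ∑ j, |tridiag n u d v i j| ≤ |u i| + |d i| + |v i| := by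
  have key : ∀ (c : ℝ) (m : ℕ), ∑ j : Fin n, (if (j : ℕ) = m then |c| else 0) ≤ |c| := by
    intro c m
    rw [Fin.sum_univ_eq_sum_range (fun j => if j = m then |c| else 0), Finset.sum_ite_eq']
    split_ifs <;> simp
  calc ∑ j, |tridiag n u d v i j|
      ≤ ∑ j : Fin n, ((if (j : ℕ) = i + 1 then |u i| else 0) + (if (j : ℕ) = i then |d i| else 0)
          + (if (j : ℕ) = i - 1 ∧ 0 < (i : ℕ) then |v i| else 0)) := by
        refine Finset.sum_le_sum fun j _ => ?_
        simp only [tridiag, of_apply]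
        split_ifs <;> first | omega | simp
    _ ≤ |u i| + |d i| + |v i| := by
        rw [Finset.sum_add_distrib, Finset.sum_add_distrib]
        gcongr
        · exact key _ _
        · exact key _ _
        · rcases Nat.eq_zero_or_pos (i : ℕ) with h | h
          · simp [h]
          · simpa [h] using key (v i) (i - 1)

section LinftyOp

attribute [local instance] Matrix.linftyOpNormedRing

variable {ι : Type*} [Fintype ι] [DecidableEq ι]

theorem abs_apply_le_linfty_opNorm (X : Matrix ι ι ℝ) (i j : ι) : |X i j| ≤ ‖X‖ := by
  rw [linfty_opNorm_def, ← Real.norm_eq_abs, ← coe_nnnorm, NNReal.coe_le_coe]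
  exact (Finset.single_le_sum (fun _ _ => zero_le) (Finset.mem_univ j)).trans
    (Finset.le_sup (f := fun i => ∑ j, ‖X i j‖₊) (Finset.mem_univ i))

theorem linfty_opNorm_le_of_sum_abs_le {X : Matrix ι ι ℝ} {C : ℝ} (hC : 0 ≤ C)
    (h : ∀ i, ∑ j, |X i j| ≤ C) : ‖X‖ ≤ C := by
  rw [linfty_opNorm_def]
  lift C to NNReal using hC
  refine NNReal.coe_le_coe.mpr (Finset.sup_le fun i _ => ?_)
  rw [← NNReal.coe_le_coe, NNReal.coe_sum]
  simpa using h i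

theorem abs_trace_mul_le (D X : Matrix ι ι ℝ) :
    |(D * X).trace| ≤ (∑ i, ∑ j, |D i j|) * ‖X‖ := by
  simp only [trace, diag_apply, mul_apply, Finset.sum_mul]
  refine (Finset.abs_sum_le_sum_abs _ _).trans (Finset.sum_le_sum fun i _ => ?_)
  refine (Finset.abs_sum_le_sum_abs _ _).trans (Finset.sum_le_sum fun j _ => ?_)
  rw [abs_mul]
  exact mul_le_mul_of_nonneg_left (abs_apply_le_linfty_opNorm X j i) (abs_nonneg _)

theorem abs_trace_pow_sub_pow_mul_le {T S : Matrix ι ι ℝ} {C : ℝ} (hT : ‖T‖ ≤ C) (hS : ‖S‖ ≤ C)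
    (l : ℕ) (X : Matrix ι ι ℝ) :
    |((T ^ (l + 1) - S ^ (l + 1)) * X).trace|
      ≤ (l + 1) * C ^ l * (∑ i, ∑ j, |T i j - S i j|) * ‖X‖ := by
  have hC : 0 ≤ C := (norm_nonneg _).trans hT
  induction l generalizing X with
  | zero => simpa [← sub_apply] using abs_trace_mul_le (T - S) X
  | succ l ih =>
    have hsplit : (T ^ (l + 2) - S ^ (l + 2)) * X
        = (T ^ (l + 1) - S ^ (l + 1)) * (T * X) + S ^ (l + 1) * ((T - S) * X) := by
      simp only [pow_succ, sub_mul, mul_sub, mul_assoc]; abel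
    have hS' : ‖X * S ^ (l + 1)‖ ≤ ‖X‖ * C ^ (l + 1) :=
      (norm_mul_le _ _).trans (mul_le_mul_of_nonneg_left
        ((norm_pow_le' S l.succ_pos).trans (pow_le_pow_left₀ (norm_nonneg _) hS _)) (norm_nonneg _))
    have h1 := ih (T * X)
    have h2 := abs_trace_mul_le (T - S) (X * S ^ (l + 1))
    have hTX : ‖T * X‖ ≤ C * ‖X‖ := (norm_mul_le _ _).trans (by gcongr)
    rw [hsplit, trace_add, trace_mul_comm (S ^ (l + 1)), mul_assoc]
    simp only [sub_apply] at h2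
    calc _ ≤ _ := abs_add_le _ _
      _ ≤ (l + 1) * C ^ l * (∑ i, ∑ j, |T i j - S i j|) * (C * ‖X‖)
          + (∑ i, ∑ j, |T i j - S i j|) * (‖X‖ * C ^ (l + 1)) := by
        gcongr
        · exact h1.trans (by gcongr)
        · exact h2.trans (by gcongr)
      _ = _ := by push_cast; ring

theorem abs_trace_pow_tridiag_sub_le {n : ℕ} {u d v u' d' v' : ℕ → ℝ} {C : ℝ}
    (hC : ∀ i, |u i| + |d i| + |v i| ≤ C) (hC' : ∀ i, |u' i| + |d' i| + |v' i| ≤ C) (l : ℕ) :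
    |(tridiag n u d v ^ (l + 1)).trace - (tridiag n u' d' v' ^ (l + 1)).trace|
      ≤ (l + 1) * C ^ l * ∑ i ∈ Finset.range n, (|u i - u' i| + |d i - d' i| + |v i - v' i|) := by
  have hC₀ : 0 ≤ C := (by positivity : (0 : ℝ) ≤ _).trans (hC 0)
  have hnorm : ∀ {u d v : ℕ → ℝ}, (∀ i, |u i| + |d i| + |v i| ≤ C) → ‖tridiag n u d v‖ ≤ C :=
    fun h => linfty_opNorm_le_of_sum_abs_le hC₀ fun i =>
      (sum_abs_tridiag_apply_le _ _ _ i).trans (h i)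
  have hone : ‖(1 : Matrix (Fin n) (Fin n) ℝ)‖ ≤ 1 :=
    linfty_opNorm_le_of_sum_abs_le zero_le_one fun i => by simp [one_apply, apply_ite]
  have h := abs_trace_pow_sub_pow_mul_le (hnorm hC) (hnorm hC') l 1
  rw [mul_one, trace_sub] at h
  refine h.trans ?_
  rw [← Fin.sum_univ_eq_sum_range]
  calc _ ≤ (l + 1) * C ^ l * (∑ i, ∑ j, |tridiag n u d v i j - tridiag n u' d' v' i j|) * 1 := by
        gcongr
    _ ≤ _ := by
        rw [mul_one]
        refine mul_le_mul_of_nonneg_left (Finset.sum_le_sum fun i _ => ?_) (by positivity)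
        simpa [← sub_apply, tridiag_sub] using sum_abs_tridiag_apply_le (u - u') (d - d') (v - v') i

end LinftyOp

theorem tendsto_trace_pow_tridiag_sub {u d v u' d' v' : ℕ → ℝ} {α β γ : ℝ}
    (hu : Tendsto u atTop (𝓝 α)) (hd : Tendsto d atTop (𝓝 β)) (hv : Tendsto v atTop (𝓝 γ))
    (hu' : Tendsto u' atTop (𝓝 α)) (hd' : Tendsto d' atTop (𝓝 β))
    (hv' : Tendsto v' atTop (𝓝 γ)) (l : ℕ) :
    Tendsto (fun n : ℕ =>
      (n : ℝ)⁻¹ * ((tridiag n u d v ^ l).trace - (tridiag n u' d' v' ^ l).trace)) atTop (𝓝 0) := by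
  rcases l with _ | l
  · simp
  obtain ⟨C, hC⟩ := (((hu.abs.add hd.abs).add hv.abs).max
    ((hu'.abs.add hd'.abs).add hv'.abs)).bddAbove_range
  have hδ : Tendsto (fun i => |u i - u' i| + |d i - d' i| + |v i - v' i|) atTop (𝓝 0) := by
    simpa using ((hu.sub hu').abs.add (hd.sub hd').abs).add (hv.sub hv').abs
  refine squeeze_zero_norm (fun n => ?_)
    ((hδ.cesaro.const_mul ((l + 1) * C ^ l)).trans_eq (by simp))
  rw [Real.norm_eq_abs, abs_mul, abs_inv, Nat.abs_cast, mul_left_comm]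
  exact mul_le_mul_of_nonneg_left (abs_trace_pow_tridiag_sub_le
    (fun i => (le_max_left _ _).trans (hC ⟨i, rfl⟩))
    (fun i => (le_max_right _ _).trans (hC ⟨i, rfl⟩)) l) (by positivity)

end Matrix

noncomputable def chebyshevAngle (n k : ℕ) : ℝ := (k + 1) * π / (n + 1)

theorem chebyshevAngle_mem_Ioo {n k : ℕ} (hk : k < n) : chebyshevAngle n k ∈ Ioo 0 π := by
  have hk' : (k : ℝ) + 1 < n + 1 := by exact_mod_cast Nat.succ_lt_succ hk
  refine ⟨by unfold chebyshevAngle; positivity, ?_⟩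
  rw [chebyshevAngle, div_lt_iff₀ (by positivity)]
  nlinarith [pi_pos]

theorem trace_pow_tridiag_half_zero_half (n l : ℕ) :
    (Matrix.tridiag n (fun _ => 1 / 2) (fun _ => 0) (fun _ => 1 / 2) ^ l).trace
      = ∑ k ∈ Finset.range n, cos (chebyshevAngle n k) ^ l := by
  rw [← Fin.sum_univ_eq_sum_range (fun k => cos (chebyshevAngle n k) ^ l)]
  refine Matrix.trace_pow_eq_sum_pow_of_injective_eigenvalues _ _ (fun k k' h => Fin.ext ?_)
    (fun k => ?_) l
  · have := injOn_cos (Ioo_subset_Icc_self (chebyshevAngle_mem_Ioo k.2))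
      (Ioo_subset_Icc_self (chebyshevAngle_mem_Ioo k'.2)) h
    have hn : (n : ℝ) + 1 ≠ 0 := by positivity
    simp only [chebyshevAngle, div_left_inj' hn, mul_left_inj' pi_ne_zero, add_left_inj,
      Nat.cast_inj] at this
    exact this
  · set θ := chebyshevAngle n k
    refine ⟨fun j : Fin n => sin ((j + 1 : ℕ) * θ), fun h0 => ?_,
      Matrix.tridiag_mulVec_eq_smul (w := fun j => sin (j * θ)) (by simp) ?_ fun j _ => ?_⟩
    · have := congrFun h0 ⟨0, k.pos⟩
      simp only [Nat.cast_one, one_mul, Pi.zero_apply, zero_add] at this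
      exact (sin_pos_of_pos_of_lt_pi (chebyshevAngle_mem_Ioo k.2).1
        (chebyshevAngle_mem_Ioo k.2).2).ne' this
    · have : ((n + 1 : ℕ) : ℝ) * θ = (k + 1 : ℕ) * π := by
        simp only [θ, chebyshevAngle]; push_cast; field_simp
      rw [this, sin_nat_mul_pi]
    · have h2 : ((j + 2 : ℕ) : ℝ) * θ = (j + 1 : ℕ) * θ + θ := by push_cast; ring
      have h0 : (j : ℝ) * θ = (j + 1 : ℕ) * θ - θ := by push_cast; ring
      rw [h2, h0, sin_add, sin_sub]
      ring

theorem exists_tridiag_eigenvector_of_three_term_recurrence (a b : ℕ → ℝ) (q : ℕ → ℝ[X])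
    (hq₀ : (q 0).natDegree = 0) (hq₁ : (q 1).natDegree = 1)
    (hrec : ∀ n : ℕ, 1 ≤ n →
      X * q n = C (a (n + 1)) * q (n + 1) + C (b n) * q n + C (a n) * q (n - 1)) :
    ∃ u d v : ℕ → ℝ, (∀ k, 2 ≤ k → u k = a (k + 1) ∧ d k = b k ∧ v k = a k) ∧
      ∀ n, 0 < n → ∀ x, (q n).IsRoot x → ∃ w ≠ 0, Matrix.tridiag n u d v *ᵥ w = x • w := by
  set α := (q 1).coeff 1
  set β := (q 1).coeff 0
  have hα : α ≠ 0 := by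
    have := leadingCoeff_ne_zero.mpr (ne_zero_of_natDegree_gt (by rw [hq₁]; exact one_pos))
    rwa [leadingCoeff, hq₁] at this
  -- `q 0` is replaced by the constant `1`, so the eigenvector never vanishes; the first two rows
  -- of the matrix absorb the change.
  refine ⟨fun k => if k = 0 then α⁻¹ else a (k + 1), fun k => if k = 0 then -β / α else b k,
    fun k => if k = 1 then a 1 * (q 0).coeff 0 else a k,
    fun k hk => by simp [show k ≠ 0 by omega, show k ≠ 1 by omega], fun n hn x hx => ?_⟩
  let w : ℕ → ℝ := fun k => match k with
    | 0 => 0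
    | 1 => 1
    | k + 2 => (q (k + 1)).eval x
  refine ⟨fun j : Fin n => w (j + 1), fun h => one_ne_zero (congrFun h ⟨0, hn⟩),
    Matrix.tridiag_mulVec_eq_smul rfl ?_ fun k _ => ?_⟩
  · obtain ⟨m, rfl⟩ := Nat.exists_eq_add_of_lt hn
    exact hx
  · have hq := fun m hm => congrArg (eval x) (hrec m hm)
    simp only [eval_mul, eval_X, eval_C, eval_add] at hq
    match k with
    | 0 =>
      have : (q 1).eval x = α * x + β := by
        rw [eq_X_add_C_of_natDegree_le_one hq₁.le]; simp [α, β]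
      simp only [w, this, ↓reduceIte]
      field_simp
      ring
    | 1 =>
      have := hq 1 le_rfl
      rw [eq_C_of_natDegree_eq_zero hq₀, eval_C] at this
      simpa [w] using this
    | j + 2 =>
      simpa [w] using hq (j + 2) (by omega)

theorem abs_inv_mul_sum_range_le {g : ℕ → ℝ} {c : ℝ} (hc : 0 ≤ c) {n : ℕ}
    (hg : ∀ i < n, |g i| ≤ c) : |(n : ℝ)⁻¹ * ∑ i ∈ Finset.range n, g i| ≤ c := by
  rcases n.eq_zero_or_pos with rfl | hn
  · simpa using hc
  rw [abs_mul, abs_inv, Nat.abs_cast, inv_mul_le_iff₀ (by exact_mod_cast hn)]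
  calc _ ≤ ∑ i ∈ Finset.range n, c :=
        (Finset.abs_sum_le_sum_abs _ _).trans
          (Finset.sum_le_sum fun i hi => hg i (Finset.mem_range.mp hi))
    _ = n * c := by simp

theorem tendsto_inv_mul_sum_sub_of_moments {a b : ℝ} {x y : ℕ → ℕ → ℝ}
    (hx : ∀ n, ∀ i < n, x n i ∈ Icc a b) (hy : ∀ n, ∀ i < n, y n i ∈ Icc a b)
    (hmom : ∀ l : ℕ, Tendsto (fun n : ℕ =>
      (n : ℝ)⁻¹ * ∑ i ∈ Finset.range n, (x n i ^ l - y n i ^ l)) atTop (𝓝 0))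
    {f : ℝ → ℝ} (hf : ContinuousOn f (Icc a b)) :
    Tendsto (fun n : ℕ => (n : ℝ)⁻¹ * ∑ i ∈ Finset.range n, (f (x n i) - f (y n i))) atTop
      (𝓝 0) := by
  have hpoly : ∀ p : Polynomial ℝ, Tendsto (fun n : ℕ =>
      (n : ℝ)⁻¹ * ∑ i ∈ Finset.range n, (p.eval (x n i) - p.eval (y n i))) atTop (𝓝 0) := by
    intro p
    induction p using Polynomial.induction_on' with
    | add p q hp hq =>
      simpa [add_sub_add_comm, Finset.sum_add_distrib, mul_add] using hp.add hq
    | monomial l c =>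
      simpa [← mul_sub, ← Finset.mul_sum, mul_left_comm] using (hmom l).const_mul c
  rw [Metric.tendsto_atTop]
  intro ε hε
  obtain ⟨p, hp⟩ := exists_polynomial_near_of_continuousOn a b f hf (ε / 3) (by positivity)
  obtain ⟨N, hN⟩ := Metric.tendsto_atTop.mp (hpoly p) (ε / 3) (by positivity)
  refine ⟨N, fun n hn => ?_⟩
  have happrox : ∀ z : ℕ → ℕ → ℝ, (∀ i < n, z n i ∈ Icc a b) →
      |(n : ℝ)⁻¹ * ∑ i ∈ Finset.range n, (f (z n i) - p.eval (z n i))| ≤ ε / 3 := fun z hz =>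
    abs_inv_mul_sum_range_le (by positivity) fun i hi => by
      rw [abs_sub_comm]; exact (hp _ (hz i hi)).le
  set A := (n : ℝ)⁻¹ * ∑ i ∈ Finset.range n, (f (x n i) - p.eval (x n i))
  set B := (n : ℝ)⁻¹ * ∑ i ∈ Finset.range n, (p.eval (x n i) - p.eval (y n i))
  set D := (n : ℝ)⁻¹ * ∑ i ∈ Finset.range n, (f (y n i) - p.eval (y n i))
  have hsplit : (n : ℝ)⁻¹ * ∑ i ∈ Finset.range n, (f (x n i) - f (y n i)) = A + B - D := by
    simp only [A, B, D, ← mul_add, ← mul_sub, ← Finset.sum_add_distrib, ← Finset.sum_sub_distrib]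
    ring_nf
  have hB : |B| < ε / 3 := by simpa only [Real.dist_eq, sub_zero] using hN n hn
  rw [Real.dist_eq, sub_zero, hsplit]
  linarith [abs_sub (A + B) D, abs_add_le A B, happrox x (hx n), happrox y (hy n)]

theorem abs_mul_sub_integral_le {g : ℝ → ℝ} {c c' t η : ℝ} (hcc' : c ≤ c')
    (hg : IntervalIntegrable g volume c c') (hη : ∀ θ ∈ Icc c c', |g t - g θ| ≤ η) :
    |(c' - c) * g t - ∫ θ in c..c', g θ| ≤ η * (c' - c) := by
  have h := intervalIntegral.norm_integral_le_of_norm_le_const (a := c) (b := c')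
    (f := fun θ => g t - g θ) fun θ hθ => hη θ (Ioc_subset_Icc_self (uIoc_of_le hcc' ▸ hθ))
  rwa [intervalIntegral.integral_sub intervalIntegrable_const hg, intervalIntegral.integral_const,
    smul_eq_mul, abs_of_nonneg (sub_nonneg.mpr hcc')] at h

theorem abs_riemann_sum_sub_integral_le {g : ℝ → ℝ} {a b η : ℝ} (hab : a ≤ b)
    (hg : ContinuousOn g (Icc a b)) {n : ℕ} (hn : 0 < n) {t : ℕ → ℝ}
    (ht : ∀ k < n, t k ∈ Icc (a + k * ((b - a) / n)) (a + (k + 1) * ((b - a) / n)))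
    (hη : ∀ x ∈ Icc a b, ∀ y ∈ Icc a b, |x - y| ≤ (b - a) / n → |g x - g y| ≤ η) :
    |(b - a) / n * ∑ k ∈ Finset.range n, g (t k) - ∫ x in a..b, g x| ≤ η * (b - a) := by
  set h := (b - a) / n
  set c : ℕ → ℝ := fun k => a + k * h
  have hh : 0 ≤ h := div_nonneg (sub_nonneg.mpr hab) (Nat.cast_nonneg n)
  have hc : ∀ k, c (k + 1) - c k = h := fun k => by push_cast [c]; ring
  have hcn : c n = b := by simp only [c, h]; field_simp; ring
  have hsub : ∀ k < n, Icc (c k) (c (k + 1)) ⊆ Icc a b := fun k hk =>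
    Icc_subset_Icc (le_add_of_nonneg_right (by positivity))
      (hcn ▸ add_le_add_right (mul_le_mul_of_nonneg_right (Nat.cast_le.mpr hk) hh) a)
  have hint : ∀ k < n, IntervalIntegrable g volume (c k) (c (k + 1)) := fun k hk =>
    (hg.mono (hsub k hk)).intervalIntegrable_of_Icc (by linarith [hc k])
  have hcell : ∀ k < n, |h * g (t k) - ∫ θ in c k..c (k + 1), g θ| ≤ η * h := by
    intro k hk
    have htk : t k ∈ Icc (c k) (c (k + 1)) := by simpa [c] using ht k hk
    have := abs_mul_sub_integral_le (by linarith [hc k]) (hint k hk) fun θ hθ =>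
      hη _ (hsub k hk htk) _ (hsub k hk hθ) (by
        rw [abs_le]; constructor <;> linarith [hc k, htk.1, htk.2, hθ.1, hθ.2])
    rwa [hc k] at this
  have hsplit : ∫ x in a..b, g x = ∑ k ∈ Finset.range n, ∫ θ in c k..c (k + 1), g θ := by
    rw [intervalIntegral.sum_integral_adjacent_intervals hint, hcn]
    simp [c]
  rw [hsplit, Finset.mul_sum, ← Finset.sum_sub_distrib]
  calc _ ≤ ∑ k ∈ Finset.range n, η * h := (Finset.abs_sum_le_sum_abs _ _).trans
        (Finset.sum_le_sum fun k hk => hcell k (Finset.mem_range.mp hk))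
    _ = η * (b - a) := by
        simp only [Finset.sum_const, Finset.card_range, nsmul_eq_mul, h]
        field_simp

theorem tendsto_riemann_sum {g : ℝ → ℝ} {a b : ℝ} (hab : a ≤ b) (hg : ContinuousOn g (Icc a b))
    {t : ℕ → ℕ → ℝ}
    (ht : ∀ n : ℕ, ∀ k < n, t n k ∈ Icc (a + k * ((b - a) / n)) (a + (k + 1) * ((b - a) / n))) :
    Tendsto (fun n : ℕ => (b - a) / n * ∑ k ∈ Finset.range n, g (t n k)) atTop
      (𝓝 (∫ x in a..b, g x)) := by
  rw [Metric.tendsto_atTop]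
  intro ε hε
  obtain ⟨δ, hδ, hgδ⟩ := Metric.uniformContinuousOn_iff_le.mp
    (isCompact_Icc.uniformContinuousOn_of_continuous hg) (ε / (b - a + 1)) (by positivity)
  obtain ⟨N, hN⟩ := exists_nat_gt ((b - a) / δ)
  refine ⟨N + 1, fun n hn => ?_⟩
  have hNn : (N : ℝ) < n := by exact_mod_cast Nat.lt_of_succ_le hn
  have hn₀ : (0 : ℝ) < n := (Nat.cast_nonneg N).trans_lt hNn
  have hmesh : (b - a) / n ≤ δ := by
    rw [div_lt_iff₀ hδ] at hN
    rw [div_le_iff₀ hn₀]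
    nlinarith
  rw [Real.dist_eq]
  refine (abs_riemann_sum_sub_integral_le hab hg (Nat.cast_pos.mp hn₀) (ht n) fun x hx y hy hxy =>
    hgδ x hx y hy (hxy.trans hmesh)).trans_lt ?_
  rw [div_mul_eq_mul_div, div_lt_iff₀ (by linarith)]
  nlinarith

theorem tendsto_inv_mul_sum_cos_chebyshevAngle {g : ℝ → ℝ} (hg : ContinuousOn g (Icc (-1) 1)) :
    Tendsto (fun n : ℕ => (n : ℝ)⁻¹ * ∑ k ∈ Finset.range n, g (cos (chebyshevAngle n k))) atTop
      (𝓝 (π⁻¹ * ∫ θ in (0 : ℝ)..π, g (cos θ))) := by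
  have htag : ∀ n : ℕ, ∀ k < n,
      chebyshevAngle n k ∈ Icc (0 + k * ((π - 0) / n)) (0 + (k + 1) * ((π - 0) / n)) := by
    intro n k hk
    have hn : (0 : ℝ) < n := by exact_mod_cast (Nat.zero_le k).trans_lt hk
    have hkn : (k : ℝ) ≤ n := by exact_mod_cast hk.le
    simp only [chebyshevAngle, zero_add, sub_zero, mem_Icc]
    constructor
    · rw [← mul_div_assoc, div_le_div_iff₀ hn (by positivity)]
      nlinarith [pi_pos]
    · rw [← mul_div_assoc]
      exact div_le_div_of_nonneg_left (by positivity) hn (by linarith)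
  have := (tendsto_riemann_sum pi_pos.le
    (hg.comp_continuous continuous_cos cos_mem_Icc).continuousOn htag).const_mul π⁻¹
  refine this.congr fun n => ?_
  simp only [Function.comp_apply, sub_zero, ← mul_assoc, div_eq_mul_inv,
    inv_mul_cancel₀ pi_ne_zero, one_mul]

theorem integral_arcsine_eq (f : ℝ → ℝ) :
    ∫ x in Ioo (-1 : ℝ) 1, f x / (π * √(1 - x ^ 2)) = π⁻¹ * ∫ θ in (0 : ℝ)..π, f (cos θ) := by
  have himage : cos '' Ioo 0 π = Ioo (-1) 1 := by
    simpa using cosPartialHomeomorph.image_source_eq_target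
  rw [← himage, integral_image_eq_integral_abs_deriv_smul measurableSet_Ioo
    (fun θ _ => (hasDerivAt_cos θ).hasDerivWithinAt) (injOn_cos.mono Ioo_subset_Icc_self),
    intervalIntegral.integral_of_le pi_pos.le, integral_Ioc_eq_integral_Ioo, ← integral_const_mul]
  refine setIntegral_congr_fun measurableSet_Ioo fun θ hθ => ?_
  have hsin : 0 < sin θ := sin_pos_of_pos_of_lt_pi hθ.1 hθ.2
  rw [← sin_sq, sqrt_sq hsin.le, abs_neg, abs_of_pos hsin, smul_eq_mul]
  field_simp

theorem stmt17_general (a b : ℕ → ℝ)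
    (haL : Filter.Tendsto a Filter.atTop (nhds (1 / 2)))
    (hbL : Filter.Tendsto b Filter.atTop (nhds 0))
    (q : ℕ → Polynomial ℝ)
    (hdeg : ∀ n, (q n).natDegree = n)
    (hrec : ∀ n : ℕ, 1 ≤ n →
      Polynomial.X * q n
        = Polynomial.C (a (n + 1)) * q (n + 1) + Polynomial.C (b n) * q n
          + Polynomial.C (a n) * q (n - 1))
    (ξ : ℕ → ℕ → ℝ)
    (hroot : ∀ n, ∀ i < n, (q n).eval (ξ n i) = 0)
    (hmem : ∀ n, ∀ i < n, ξ n i ∈ Set.Icc (-1 : ℝ) 1)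
    (hinj : ∀ n, ∀ i < n, ∀ j < n, ξ n i = ξ n j → i = j) :
    ∀ f : ℝ → ℝ, ContinuousOn f (Set.Icc (-1 : ℝ) 1) →
      Filter.Tendsto (fun n : ℕ => (1 / (n : ℝ)) * ∑ i ∈ Finset.range n, f (ξ n i))
        Filter.atTop
        (nhds (∫ x in Set.Ioo (-1 : ℝ) 1, f x / (Real.pi * Real.sqrt (1 - x ^ 2)))) := by
  intro f hf
  obtain ⟨u, d, v, hcoeff, heig⟩ :=
    exists_tridiag_eigenvector_of_three_term_recurrence a b q (hdeg 0) (hdeg 1) hrec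
  have htail {s s' : ℕ → ℝ} (h : ∀ k, 2 ≤ k → s k = s' k) : s' =ᶠ[atTop] s :=
    eventually_atTop.mpr ⟨2, fun k hk => (h k hk).symm⟩
  have hu := (haL.comp (tendsto_add_atTop_nat 1)).congr' (htail fun k hk => (hcoeff k hk).1)
  have hd := hbL.congr' (htail fun k hk => (hcoeff k hk).2.1)
  have hv := haL.congr' (htail fun k hk => (hcoeff k hk).2.2)
  have hmom : ∀ l : ℕ, Tendsto (fun n : ℕ => (n : ℝ)⁻¹ *
      ∑ i ∈ Finset.range n, (ξ n i ^ l - cos (chebyshevAngle n i) ^ l)) atTop (𝓝 0) := by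
    intro l
    refine (Matrix.tendsto_trace_pow_tridiag_sub hu hd hv tendsto_const_nhds tendsto_const_nhds
      tendsto_const_nhds l).congr fun n => ?_
    rw [trace_pow_tridiag_half_zero_half, Finset.sum_sub_distrib,
      Matrix.trace_pow_eq_sum_pow_of_injective_eigenvalues _ (fun i : Fin n => ξ n i)
        (fun i j h => Fin.ext (hinj n i i.2 j j.2 h))
        (fun i => heig n i.pos _ (hroot n i i.2)),
      Fin.sum_univ_eq_sum_range (fun i => ξ n i ^ l)]
  have := (tendsto_inv_mul_sum_sub_of_moments hmem (fun n k _ => cos_mem_Icc _) hmom hf).add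
    (tendsto_inv_mul_sum_cos_chebyshevAngle hf)
  rw [zero_add, ← integral_arcsine_eq] at this
  refine this.congr fun n => ?_
  rw [one_div, ← mul_add, ← Finset.sum_add_distrib]
  simp

/-- If the recurrence coefficients of orthonormal polynomials on `[-1,1]` satisfy
`a_n → 1/2`, `b_n → 0`, then the normalized zero-counting measures converge weak-star to
the arcsine measure. -/
theorem stmt17 (a b : ℕ → ℝ) (ha : ∀ n, 0 < a n)
    (haL : Filter.Tendsto a Filter.atTop (nhds (1 / 2)))
    (hbL : Filter.Tendsto b Filter.atTop (nhds 0))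
    (q : ℕ → Polynomial ℝ)
    (hdeg : ∀ n, (q n).natDegree = n)
    (hrec : ∀ n : ℕ, 1 ≤ n →
      Polynomial.X * q n
        = Polynomial.C (a (n + 1)) * q (n + 1) + Polynomial.C (b n) * q n
          + Polynomial.C (a n) * q (n - 1))
    (ξ : ℕ → ℕ → ℝ)
    (hroot : ∀ n, ∀ i < n, (q n).eval (ξ n i) = 0)
    (hmem : ∀ n, ∀ i < n, ξ n i ∈ Set.Icc (-1 : ℝ) 1)
    (hinj : ∀ n, ∀ i < n, ∀ j < n, ξ n i = ξ n j → i = j) :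
    ∀ f : ℝ → ℝ, ContinuousOn f (Set.Icc (-1 : ℝ) 1) →
      Filter.Tendsto (fun n : ℕ => (1 / (n : ℝ)) * ∑ i ∈ Finset.range n, f (ξ n i))
        Filter.atTop
        (nhds (∫ x in Set.Ioo (-1 : ℝ) 1, f x / (Real.pi * Real.sqrt (1 - x ^ 2)))) :=
  stmt17_general a b haL hbL q hdeg hrec ξ hroot hmem hinj
end

section
/- Trace-moment form of zero distribution: let J_n be the n×n tridiagonal symmetric matrix with diagonal entries b_0,…,b_{n−1} and off-diagonal entries a_1,…,a_{n−1}, where a_n → 1/2 and b_n → 0. Then for every fixed l ∈ ℕ, (1/n)·Tr(J_n^l) → (1/π)∫_{−1}^1 x^l /√(1−x²) dx = 2^{−l}·C(l, l/2) for even l (and 0 for odd l). -/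
open scoped BigOperators

/-- The truncated Jacobi matrix with diagonal `b_0,…,b_{n−1}` and off-diagonal
`a_1,…,a_{n−1}`. -/
noncomputable def jacobiMat (a b : ℕ → ℝ) (n : ℕ) : Matrix (Fin n) (Fin n) ℝ :=
  fun i j =>
    if (i : ℕ) = (j : ℕ) then b i
    else if (i : ℕ) + 1 = (j : ℕ) ∨ (j : ℕ) + 1 = (i : ℕ) then a (max (i : ℕ) (j : ℕ))
    else 0

/-!
The diagonal entry `(J_n^l)_{ii}` is a weighted count of closed walks of length `l` from `i` on
the path `0 - 1 - 2 - ⋯`, with weight `a` on the edges and `b` on the loops. When `i + l < n` the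
walks do not reach the truncation, and as `i → ∞` the weights tend to `1/2` on edges and `0` on
loops, so the entry tends to the probability `C(l, l/2) / 2^l` that a simple random walk on `ℤ` is
back at `0` after `l` steps. Cesàro averaging then gives the limit of `(1/n) Tr(J_n^l)`, the at
most `l` rows near the truncation contributing `O(1/n)`. On the other side, `x = sin θ` turns the
`l`-th arcsine moment into `(1/π) ∫_{-π/2}^{π/2} sin^l θ dθ`, which satisfies the Wallis
recursion `m_{l+2} = (l+1)/(l+2) m_l`, as does `C(l, l/2) / 2^l`.
-/

open Filter Topology Finset

noncomputable section

def jacobiEntry (a b : ℕ → ℝ) (i j : ℕ) : ℝ :=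
  if i = j then b i else if i + 1 = j ∨ j + 1 = i then a (max i j) else 0

def jacobiTruncPow (a b : ℕ → ℝ) (n : ℕ) : ℕ → ℕ → ℕ → ℝ
  | 0, i, j => if i = j then 1 else 0
  | l + 1, i, j => ∑ m ∈ range n, jacobiEntry a b i m * jacobiTruncPow a b n l m j

/-- The `(i, j)` entry of the `l`-th power of the semi-infinite Jacobi matrix: all truncations of
size `> i + l` agree on it (`jacobiTruncPow_eq_of_lt`). -/
def jacobiPow (a b : ℕ → ℝ) (l i j : ℕ) : ℝ := jacobiTruncPow a b (i + l + 1) l i j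

def arcsineMoment (l : ℕ) : ℝ :=
  if l % 2 = 0 then (l.choose (l / 2) : ℝ) / 2 ^ l else 0

/-- The number of `±1` walks of length `l` from `0` to `t`; they have `(l + t) / 2` up-steps. -/
def walkCount (l : ℕ) (t : ℤ) : ℕ :=
  if 2 ∣ (l + t) ∧ -(l : ℤ) ≤ t then l.choose ((l + t).toNat / 2) else 0

def walkProb (l : ℕ) (t : ℤ) : ℝ := walkCount l t / 2 ^ l

end

section ArcsineMoments

open Real

lemma arcsineMoment_two_mul (k : ℕ) : arcsineMoment (2 * k) = k.centralBinom / 4 ^ k := by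
  simp [arcsineMoment, Nat.centralBinom, pow_mul, show (2 : ℝ) ^ 2 = 4 by norm_num]

lemma arcsineMoment_add_two (l : ℕ) :
    arcsineMoment (l + 2) = (l + 1) / (l + 2) * arcsineMoment l := by
  obtain ⟨k, rfl | rfl⟩ := Nat.even_or_odd' l
  · have hcb : ((k : ℝ) + 1) * (k + 1).centralBinom = 2 * (2 * k + 1) * k.centralBinom := by
      exact_mod_cast Nat.succ_mul_centralBinom_succ k
    rw [show 2 * k + 2 = 2 * (k + 1) by ring, arcsineMoment_two_mul, arcsineMoment_two_mul]
    push_cast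
    field_simp
    linear_combination 2 * 4 ^ k * hcb
  · simp [arcsineMoment, Nat.add_mod]

lemma integral_sin_pow_eq_pi_mul_arcsineMoment (l : ℕ) :
    ∫ θ in -(π / 2)..π / 2, sin θ ^ l = π * arcsineMoment l := by
  induction l using Nat.twoStepInduction with
  | zero => simp [arcsineMoment]
  | one => simp [arcsineMoment]
  | more l ih _ =>
    rw [integral_sin_pow, ih, arcsineMoment_add_two]
    simp only [sin_neg, sin_pi_div_two, cos_neg, cos_pi_div_two]
    ring

lemma integral_arcsine_pow (l : ℕ) :
    ∫ x in Set.Ioo (-1 : ℝ) 1, x ^ l / (π * √(1 - x ^ 2)) = arcsineMoment l := by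
  have himage : sin '' Set.Ioo (-(π / 2)) (π / 2) = Set.Ioo (-1) 1 :=
    sinPartialHomeomorph.image_source_eq_target
  rw [← himage, MeasureTheory.integral_image_eq_integral_abs_deriv_smul measurableSet_Ioo
    (fun θ _ => (hasDerivAt_sin θ).hasDerivWithinAt) (injOn_sin.mono Set.Ioo_subset_Icc_self)]
  have hdensity : Set.EqOn (fun θ => |cos θ| • (sin θ ^ l / (π * √(1 - sin θ ^ 2))))
      (fun θ => sin θ ^ l / π) (Set.Ioo (-(π / 2)) (π / 2)) := by
    intro θ hθ
    have hcos := cos_pos_of_mem_Ioo hθ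
    simp only [smul_eq_mul, ← cos_sq', sqrt_sq hcos.le, abs_of_pos hcos]
    field_simp
  rw [MeasureTheory.setIntegral_congr_fun measurableSet_Ioo hdensity,
    ← MeasureTheory.integral_Ioc_eq_integral_Ioo,
    ← intervalIntegral.integral_of_le (by linarith [pi_pos]), intervalIntegral.integral_div,
    integral_sin_pow_eq_pi_mul_arcsineMoment]
  field_simp

end ArcsineMoments

section JacobiEntries

variable {a b : ℕ → ℝ} {i j n : ℕ}

lemma jacobiEntry_eq_zero (h : i + 1 < j ∨ j + 1 < i) : jacobiEntry a b i j = 0 := by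
  grind [jacobiEntry]

lemma nonneg_of_forall_abs_jacobiEntry_le {C : ℝ} (hK : ∀ i j, |jacobiEntry a b i j| ≤ C) :
    0 ≤ C := by
  simpa [jacobiEntry_eq_zero] using hK 0 2

lemma sum_range_jacobiEntry_mul (hi : 1 ≤ i) (hn : i + 1 < n) (x : ℕ → ℝ) :
    ∑ m ∈ range n, jacobiEntry a b i m * x m
      = a i * x (i - 1) + b i * x i + a (i + 1) * x (i + 1) := by
  have hsub : {i - 1, i, i + 1} ⊆ range n := by
    intro m hm
    simp only [mem_insert, mem_singleton] at hm
    simp only [mem_range]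
    omega
  rw [← sum_subset hsub fun m _ hm => by
    simp only [mem_insert, mem_singleton] at hm
    rw [jacobiEntry_eq_zero (by omega), zero_mul]]
  rw [sum_insert (by simp; omega), sum_insert (by simp), sum_singleton]
  simp only [jacobiEntry]
  grind

lemma sum_range_abs_jacobiEntry_le {C : ℝ} (hK : ∀ i j, |jacobiEntry a b i j| ≤ C) (i n : ℕ) :
    ∑ m ∈ range n, |jacobiEntry a b i m| ≤ 3 * C := by
  set S : Finset ℕ := {i - 1, i, i + 1}
  have hC := nonneg_of_forall_abs_jacobiEntry_le hK
  calc ∑ m ∈ range n, |jacobiEntry a b i m|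
      ≤ ∑ m ∈ range n ∪ S, |jacobiEntry a b i m| :=
        sum_le_sum_of_subset_of_nonneg subset_union_left fun _ _ _ => abs_nonneg _
    _ = ∑ m ∈ S, |jacobiEntry a b i m| := by
        refine (sum_subset subset_union_right fun m _ hm => ?_).symm
        simp only [S, mem_insert, mem_singleton] at hm
        rw [jacobiEntry_eq_zero (by omega), abs_zero]
    _ ≤ #S • C := sum_le_card_nsmul _ _ _ fun m _ => hK i m
    _ ≤ 3 * C := by
        rw [nsmul_eq_mul]
        gcongr
        exact_mod_cast card_le_three

end JacobiEntries

section TruncatedPowers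

variable {a b : ℕ → ℝ}

lemma jacobiMat_pow_apply (n l : ℕ) (i j : Fin n) :
    (jacobiMat a b n ^ l) i j = jacobiTruncPow a b n l i j := by
  induction l generalizing i j with
  | zero => simp [Matrix.one_apply, jacobiTruncPow, Fin.ext_iff]
  | succ l ih =>
    rw [pow_succ', Matrix.mul_apply, jacobiTruncPow,
      ← Fin.sum_univ_eq_sum_range (fun m => jacobiEntry a b i m * jacobiTruncPow a b n l m j)]
    simp only [ih]
    rfl

lemma trace_jacobiMat_pow (n l : ℕ) :
    (jacobiMat a b n ^ l).trace = ∑ i ∈ range n, jacobiTruncPow a b n l i i := by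
  simp only [Matrix.trace, Matrix.diag, jacobiMat_pow_apply]
  exact Fin.sum_univ_eq_sum_range (fun i => jacobiTruncPow a b n l i i) n

lemma jacobiTruncPow_eq_of_lt {l i n n' : ℕ} (j : ℕ) (hn : i + l < n) (hn' : i + l < n') :
    jacobiTruncPow a b n l i j = jacobiTruncPow a b n' l i j := by
  induction l generalizing i with
  | zero => rfl
  | succ l ih =>
    have hrow : ∀ N, i + (l + 1) < N → jacobiTruncPow a b N (l + 1) i j
        = ∑ m ∈ range (i + 2), jacobiEntry a b i m * jacobiTruncPow a b N l m j := by
      intro N hN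
      refine (sum_subset (range_subset_range.2 (by omega)) fun m hmN hm => ?_).symm
      simp only [mem_range] at hmN hm
      rw [jacobiEntry_eq_zero (by omega), zero_mul]
    rw [hrow n hn, hrow n' hn']
    refine sum_congr rfl fun m hm => ?_
    simp only [mem_range] at hm
    rw [ih (by omega) (by omega)]

lemma jacobiTruncPow_eq_jacobiPow {l i n : ℕ} (j : ℕ) (h : i + l < n) :
    jacobiTruncPow a b n l i j = jacobiPow a b l i j :=
  jacobiTruncPow_eq_of_lt j h (by omega)

lemma abs_jacobiTruncPow_le {C : ℝ} (hK : ∀ i j, |jacobiEntry a b i j| ≤ C) (n l i j : ℕ) :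
    |jacobiTruncPow a b n l i j| ≤ (3 * C) ^ l := by
  induction l generalizing i with
  | zero => by_cases h : i = j <;> simp [jacobiTruncPow, h]
  | succ l ih =>
    have hC := nonneg_of_forall_abs_jacobiEntry_le hK
    calc |jacobiTruncPow a b n (l + 1) i j|
        ≤ ∑ m ∈ range n, |jacobiEntry a b i m| * |jacobiTruncPow a b n l m j| := by
          simpa only [jacobiTruncPow, abs_mul] using abs_sum_le_sum_abs
            (fun m => jacobiEntry a b i m * jacobiTruncPow a b n l m j) (range n)
      _ ≤ ∑ m ∈ range n, |jacobiEntry a b i m| * (3 * C) ^ l := by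
          gcongr with m
          exact ih m
      _ ≤ 3 * C * (3 * C) ^ l := by
          rw [← sum_mul]
          gcongr
          exact sum_range_abs_jacobiEntry_le hK i n
      _ = (3 * C) ^ (l + 1) := (pow_succ' _ _).symm

lemma abs_jacobiPow_le {C : ℝ} (hK : ∀ i j, |jacobiEntry a b i j| ≤ C) (l i j : ℕ) :
    |jacobiPow a b l i j| ≤ (3 * C) ^ l :=
  abs_jacobiTruncPow_le hK _ l i j

lemma jacobiPow_succ {l i : ℕ} (j : ℕ) (hi : 1 ≤ i) :
    jacobiPow a b (l + 1) i j = a i * jacobiPow a b l (i - 1) j + b i * jacobiPow a b l i j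
      + a (i + 1) * jacobiPow a b l (i + 1) j := by
  rw [jacobiPow, jacobiTruncPow, sum_range_jacobiEntry_mul hi (by omega),
    jacobiTruncPow_eq_jacobiPow j (by omega), jacobiTruncPow_eq_jacobiPow j (by omega),
    jacobiTruncPow_eq_jacobiPow j (by omega)]

end TruncatedPowers

section RandomWalk

lemma walkCount_succ (l : ℕ) (t : ℤ) :
    walkCount (l + 1) t = walkCount l (t + 1) + walkCount l (t - 1) := by
  unfold walkCount
  by_cases hpar : 2 ∣ ((l : ℤ) + 1 + t)
  · -- `j` up-steps; Pascal's rule splits the walks according to their last step.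
    obtain ⟨j, hj⟩ := hpar
    obtain rfl : t = 2 * j - l - 1 := by omega
    rcases lt_trichotomy j 0 with hj0 | rfl | hj0
    · rw [if_neg (by push_cast; omega), if_neg (by omega), if_neg (by omega)]
    · rw [if_pos (by push_cast; omega), if_pos (by omega), if_neg (by omega)]
      simp
    · obtain ⟨k, rfl⟩ : ∃ k : ℕ, j = k + 1 := ⟨(j - 1).toNat, by omega⟩
      rw [if_pos (by push_cast; omega), if_pos (by omega), if_pos (by omega),
        show (((l + 1 : ℕ) : ℤ) + (2 * (k + 1 : ℤ) - l - 1)).toNat / 2 = k + 1 by omega,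
        show ((l : ℤ) + (2 * (k + 1 : ℤ) - l - 1 + 1)).toNat / 2 = k + 1 by omega,
        show ((l : ℤ) + (2 * (k + 1 : ℤ) - l - 1 - 1)).toNat / 2 = k by omega,
        Nat.choose_succ_succ', add_comm]
  · rw [if_neg (by push_cast; omega), if_neg (by omega), if_neg (by omega)]

lemma walkProb_zero (t : ℤ) : walkProb 0 t = if t = 0 then 1 else 0 := by
  by_cases ht : t = 0
  · simp [walkProb, walkCount, ht]
  · simp only [walkProb, walkCount, ht, if_false]
    split_ifs with h
    · rw [Nat.choose_eq_zero_of_lt (by omega)]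
      simp
    · simp

lemma walkProb_succ (l : ℕ) (t : ℤ) :
    walkProb (l + 1) t = (walkProb l (t + 1) + walkProb l (t - 1)) / 2 := by
  simp only [walkProb, walkCount_succ, pow_succ]
  push_cast
  ring

lemma walkProb_zero_right (l : ℕ) : walkProb l 0 = arcsineMoment l := by
  simp only [walkProb, walkCount, arcsineMoment]
  split_ifs <;> first | omega | simp_all

end RandomWalk

section Limits

variable {a b : ℕ → ℝ}

lemma exists_abs_jacobiEntry_le (ha : BddAbove (Set.range fun i => |a i|))
    (hb : BddAbove (Set.range fun i => |b i|)) : ∃ C, ∀ i j, |jacobiEntry a b i j| ≤ C := by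
  obtain ⟨Ca, hCa⟩ := ha
  obtain ⟨Cb, hCb⟩ := hb
  refine ⟨max (max Ca Cb) 0, fun i j => ?_⟩
  unfold jacobiEntry
  split_ifs
  · exact le_max_of_le_left (le_max_of_le_right (hCb ⟨i, rfl⟩))
  · exact le_max_of_le_left (le_max_of_le_left (hCa ⟨_, rfl⟩))
  · simp

lemma tendsto_jacobiPow (haL : Tendsto a atTop (𝓝 (1 / 2))) (hbL : Tendsto b atTop (𝓝 0))
    (l : ℕ) (t : ℤ) :
    Tendsto (fun i => jacobiPow a b l i (i + t).toNat) atTop (𝓝 (walkProb l t)) := by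
  induction l generalizing t with
  | zero =>
    rw [walkProb_zero]
    refine tendsto_const_nhds.congr' ?_
    filter_upwards [eventually_ge_atTop t.natAbs] with i hi
    simp only [jacobiPow, jacobiTruncPow]
    split_ifs <;> first | rfl | omega
  | succ l ih =>
    have hdown := haL.mul ((ih (t + 1)).comp (tendsto_sub_atTop_nat 1))
    have hstay := hbL.mul (ih t)
    have hup := (haL.comp (tendsto_add_atTop_nat 1)).mul
      ((ih (t - 1)).comp (tendsto_add_atTop_nat 1))
    have hlim : 1 / 2 * walkProb l (t + 1) + 0 * walkProb l t + 1 / 2 * walkProb l (t - 1)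
        = walkProb (l + 1) t := by
      rw [walkProb_succ]
      ring
    refine hlim ▸ ((hdown.add hstay).add hup).congr' ?_
    filter_upwards [eventually_ge_atTop (t.natAbs + 1)] with i hi
    rw [jacobiPow_succ _ (by omega)]
    simp only [Function.comp_apply]
    rw [show ((i - 1 : ℕ) : ℤ) + (t + 1) = i + t by omega,
      show ((i + 1 : ℕ) : ℤ) + (t - 1) = i + t by push_cast; ring]

lemma abs_sum_jacobiTruncPow_sub_jacobiPow_le {C : ℝ} (hK : ∀ i j, |jacobiEntry a b i j| ≤ C)
    (n l : ℕ) :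
    |∑ i ∈ range n, (jacobiTruncPow a b n l i i - jacobiPow a b l i i)|
      ≤ l * (2 * (3 * C) ^ l) := by
  calc |∑ i ∈ range n, (jacobiTruncPow a b n l i i - jacobiPow a b l i i)|
      ≤ ∑ i ∈ range n, |jacobiTruncPow a b n l i i - jacobiPow a b l i i| :=
        abs_sum_le_sum_abs _ _
    _ = ∑ i ∈ Ico (n - l) n, |jacobiTruncPow a b n l i i - jacobiPow a b l i i| := by
        refine (sum_subset (fun i hi => ?_) fun i hi hi' => ?_).symm
        · simp only [mem_Ico, mem_range] at hi ⊢
          omega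
        · simp only [mem_Ico, mem_range] at hi hi'
          rw [jacobiTruncPow_eq_jacobiPow i (by omega), sub_self, abs_zero]
    _ ≤ #(Ico (n - l) n) • (2 * (3 * C) ^ l) := by
        refine sum_le_card_nsmul _ _ _ fun i _ => (abs_sub _ _).trans ?_
        rw [two_mul]
        exact add_le_add (abs_jacobiTruncPow_le hK n l i i) (abs_jacobiPow_le hK l i i)
    _ ≤ l * (2 * (3 * C) ^ l) := by
        have hC := nonneg_of_forall_abs_jacobiEntry_le hK
        rw [Nat.card_Ico, nsmul_eq_mul]
        gcongr
        exact_mod_cast (by omega : n - (n - l) ≤ l)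

lemma tendsto_avg_diag_jacobiTruncPow (haL : Tendsto a atTop (𝓝 (1 / 2)))
    (hbL : Tendsto b atTop (𝓝 0)) (l : ℕ) :
    Tendsto (fun n : ℕ => (1 / (n : ℝ)) * ∑ i ∈ range n, jacobiTruncPow a b n l i i)
      atTop (𝓝 (walkProb l 0)) := by
  obtain ⟨C, hK⟩ := exists_abs_jacobiEntry_le haL.abs.bddAbove_range hbL.abs.bddAbove_range
  have hdiag : Tendsto (fun i => jacobiPow a b l i i) atTop (𝓝 (walkProb l 0)) := by
    simpa using tendsto_jacobiPow haL hbL l 0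
  have hboundary : Tendsto (fun n : ℕ =>
      (1 / (n : ℝ)) * ∑ i ∈ range n, (jacobiTruncPow a b n l i i - jacobiPow a b l i i))
      atTop (𝓝 0) := by
    have hvanish : Tendsto (fun n : ℕ => 1 / (n : ℝ) * (l * (2 * (3 * C) ^ l))) atTop (𝓝 0) := by
      simpa using tendsto_one_div_atTop_nhds_zero_nat.mul_const (l * (2 * (3 * C) ^ l))
    refine squeeze_zero_norm (fun n => ?_) hvanish
    rw [norm_mul, Real.norm_eq_abs, Real.norm_eq_abs, abs_of_nonneg (by positivity)]
    gcongr
    exact abs_sum_jacobiTruncPow_sub_jacobiPow_le hK n l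
  refine (add_zero (walkProb l 0) ▸ hdiag.cesaro.add hboundary).congr fun n => ?_
  rw [one_div, ← mul_add, ← sum_add_distrib]
  simp only [add_sub_cancel]

end Limits

theorem stmt18_general (a b : ℕ → ℝ)
    (haL : Filter.Tendsto a Filter.atTop (nhds (1 / 2)))
    (hbL : Filter.Tendsto b Filter.atTop (nhds 0)) (l : ℕ) :
    Filter.Tendsto (fun n : ℕ => (1 / (n : ℝ)) * Matrix.trace (jacobiMat a b n ^ l))
      Filter.atTop
      (nhds (if l % 2 = 0 then (Nat.choose l (l / 2) : ℝ) / 2 ^ l else 0)) ∧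
    (∫ x in Set.Ioo (-1 : ℝ) 1, x ^ l / (Real.pi * Real.sqrt (1 - x ^ 2)))
      = if l % 2 = 0 then (Nat.choose l (l / 2) : ℝ) / 2 ^ l else 0 := by
  refine ⟨?_, integral_arcsine_pow l⟩
  simpa only [trace_jacobiMat_pow, walkProb_zero_right, arcsineMoment] using
    tendsto_avg_diag_jacobiTruncPow haL hbL l

/-- Trace-moment form of zero distribution: if `a_n → 1/2` and `b_n → 0`, then for every
fixed `l`, `(1/n)·Tr(J_n^l)` converges to the `l`-th moment of the arcsine measure,
`2^{−l}·C(l, l/2)` for even `l` and `0` for odd `l`. -/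
theorem stmt18 (a b : ℕ → ℝ) (ha : ∀ n, 0 < a n)
    (haL : Filter.Tendsto a Filter.atTop (nhds (1 / 2)))
    (hbL : Filter.Tendsto b Filter.atTop (nhds 0)) (l : ℕ) :
    Filter.Tendsto (fun n : ℕ => (1 / (n : ℝ)) * Matrix.trace (jacobiMat a b n ^ l))
      Filter.atTop
      (nhds (if l % 2 = 0 then (Nat.choose l (l / 2) : ℝ) / 2 ^ l else 0)) ∧
    (∫ x in Set.Ioo (-1 : ℝ) 1, x ^ l / (Real.pi * Real.sqrt (1 - x ^ 2)))
      = if l % 2 = 0 then (Nat.choose l (l / 2) : ℝ) / 2 ^ l else 0 :=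
  stmt18_general a b haL hbL l
end
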